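/- (Bounds on q₃ for high temperatures; Proposition prop:bounds-highA.) Suppose −B²/(3C) ≤ A < 0 and let (q₁, q₂, q₃) be a solution of (EL123)–(BC123) with q₃ < 0 everywhere in Ω. Then −s₊/6 ≤ q₃(x,y) ≤ s₋/3 for every (x,y) ∈ Ω. -/

import Mathlib

/-!
All bounds come from the weak maximum principle, applied to functions whose Laplacian has a
sign wherever the bound in question fails.

Put `σ = q₁² + q₂² + 3q₃²`. Along a solution, `Δσ` is at least `2λ²/L` times
`σ (A + 2Cσ) + 3B q₃ (q₁² + q₂² - q₃²)`, which is positive as soon as `σ > s₊²/3`; on `∂Ω` we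
have `|q₁| ≤ s₊/2`, `q₂ = 0` and `q₃ = -s₊/6`, so `σ ≤ s₊²/3` on all of `Ω̄`. Next,
`L Δq₃ / λ² = q₃ (A - Bq₃ + 6Cq₃²) + (q₁² + q₂²)(2Cq₃ + B/3)`, where
`A - Bt + 6Ct² = 6C (t - s₊/3)(t - s₋/3)` since `s₊, s₋` are the roots of `2Cs² - Bs + 3A`.
With `σ ≤ s₊²/3` this is negative where `q₃ < -s₊/6`, and it is positive where
`s₋/3 < q₃ < 0`, which gives both bounds. The condition `-B²/(3C) ≤ A` is `s₋ ≥ -s₊/2`; it makes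
the boundary value `-s₊/6` lie below `s₋/3`.
-/

open MeasureTheory Set

noncomputable section

/-- `s₊ = (B + √(B² + 24|A|C))/(4C)`. -/
def splus (A B C : ℝ) : ℝ := (B + Real.sqrt (B ^ 2 + 24 * |A| * C)) / (4 * C)

/-- `s₋ = (B − √(B² + 24|A|C))/(4C)`. -/
def sminus (A B C : ℝ) : ℝ := (B - Real.sqrt (B ^ 2 + 24 * |A| * C)) / (4 * C)

/-- The truncated square `Ω`. -/
def TSq (η : ℝ) : Set (ℝ × ℝ) :=
  {p | |p.1| < 1 - η ∧ |p.2| < 1 - η ∧ |p.1 + p.2| < 1 ∧ |p.1 - p.2| < 1}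

/-- Long edge `C₁` on the line `x + y = 1`. -/
def edgeC1 (η : ℝ) : Set (ℝ × ℝ) := {p | p.1 + p.2 = 1 ∧ η ≤ p.1 ∧ p.1 ≤ 1 - η}
/-- Long edge `C₂` on the line `y − x = 1`. -/
def edgeC2 (η : ℝ) : Set (ℝ × ℝ) := {p | p.2 - p.1 = 1 ∧ -(1 - η) ≤ p.1 ∧ p.1 ≤ -η}
/-- Long edge `C₃` on the line `x + y = −1`. -/
def edgeC3 (η : ℝ) : Set (ℝ × ℝ) := {p | p.1 + p.2 = -1 ∧ -(1 - η) ≤ p.1 ∧ p.1 ≤ -η}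
/-- Long edge `C₄` on the line `x − y = 1`. -/
def edgeC4 (η : ℝ) : Set (ℝ × ℝ) := {p | p.1 - p.2 = 1 ∧ η ≤ p.1 ∧ p.1 ≤ 1 - η}
/-- Short edge `S₁`, `x = 1 − η`. -/
def edgeS1 (η : ℝ) : Set (ℝ × ℝ) := {p | p.1 = 1 - η ∧ |p.2| ≤ η}
/-- Short edge `S₂`, `y = 1 − η`. -/
def edgeS2 (η : ℝ) : Set (ℝ × ℝ) := {p | p.2 = 1 - η ∧ |p.1| ≤ η}
/-- Short edge `S₃`, `x = −(1 − η)`. -/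
def edgeS3 (η : ℝ) : Set (ℝ × ℝ) := {p | p.1 = -(1 - η) ∧ |p.2| ≤ η}
/-- Short edge `S₄`, `y = −(1 − η)`. -/
def edgeS4 (η : ℝ) : Set (ℝ × ℝ) := {p | p.2 = -(1 - η) ∧ |p.1| ≤ η}

/-- The interpolating boundary function `g₀(s) = s₊ s/(2η)`. -/
def g0 (A B C η s : ℝ) : ℝ := splus A B C * s / (2 * η)

/-- The two-dimensional Laplacian: sum of the two second partial derivatives. -/
def lap2 (q : ℝ × ℝ → ℝ) (p : ℝ × ℝ) : ℝ :=
  deriv (deriv fun x => q (x, p.2)) p.1 + deriv (deriv fun y => q (p.1, y)) p.2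

/-- `|∇q|²` in two dimensions. -/
def gradSq2 (q : ℝ × ℝ → ℝ) (p : ℝ × ℝ) : ℝ :=
  (deriv (fun x => q (x, p.2)) p.1) ^ 2 + (deriv (fun y => q (p.1, y)) p.2) ^ 2

/-- The Dirichlet boundary condition `q₁ = q₁b` on `∂Ω`. -/
def BC1 (A B C η : ℝ) (q1 : ℝ × ℝ → ℝ) : Prop :=
  (∀ p ∈ edgeC1 η ∪ edgeC3 η, q1 p = -(splus A B C) / 2) ∧
  (∀ p ∈ edgeC2 η ∪ edgeC4 η, q1 p = splus A B C / 2) ∧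
  (∀ p ∈ edgeS1 η ∪ edgeS3 η, q1 p = g0 A B C η p.2) ∧
  (∀ p ∈ edgeS2 η ∪ edgeS4 η, q1 p = g0 A B C η p.1)

/-- A solution of the system (EL123) with boundary conditions (BC123):
a triple of functions in `C²(Ω) ∩ C(Ω̄)` satisfying the three PDEs in `Ω`,
with `q₁ = q₁b`, `q₂ = 0`, `q₃ = −s₊/6` on `∂Ω`. -/
def IsSolEL123 (A B C L lam η : ℝ) (q1 q2 q3 : ℝ × ℝ → ℝ) : Prop :=
  ContDiffOn ℝ 2 q1 (TSq η) ∧ ContDiffOn ℝ 2 q2 (TSq η) ∧ ContDiffOn ℝ 2 q3 (TSq η) ∧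
  ContinuousOn q1 (closure (TSq η)) ∧ ContinuousOn q2 (closure (TSq η)) ∧
  ContinuousOn q3 (closure (TSq η)) ∧
  (∀ p ∈ TSq η, lap2 q1 p =
    lam ^ 2 / L * q1 p *
      (A + 2 * B * q3 p + 2 * C * ((q1 p) ^ 2 + (q2 p) ^ 2 + 3 * (q3 p) ^ 2))) ∧
  (∀ p ∈ TSq η, lap2 q2 p =
    lam ^ 2 / L * q2 p *
      (A + 2 * B * q3 p + 2 * C * ((q1 p) ^ 2 + (q2 p) ^ 2 + 3 * (q3 p) ^ 2))) ∧
  (∀ p ∈ TSq η, lap2 q3 p =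
    lam ^ 2 / L * q3 p *
      (A - B * q3 p + 2 * C * ((q1 p) ^ 2 + (q2 p) ^ 2 + 3 * (q3 p) ^ 2))
      + lam ^ 2 * B / (3 * L) * ((q1 p) ^ 2 + (q2 p) ^ 2)) ∧
  BC1 A B C η q1 ∧
  (∀ p ∈ frontier (TSq η), q2 p = 0) ∧
  (∀ p ∈ frontier (TSq η), q3 p = -(splus A B C) / 6)

open Filter Topology

section SecondDerivative

variable {f g : ℝ → ℝ} {a : ℝ}

theorem deriv_deriv_nonpos_of_isLocalMax (h : IsLocalMax f a) (hc : ContinuousAt f a) :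
    deriv (deriv f) a ≤ 0 := by
  by_contra! hpos
  -- a strict second-order minimum that is also a maximum forces `f` to be locally constant
  have hmin := isLocalMin_of_deriv_deriv_pos hpos h.deriv_eq_zero hc
  have hconst : f =ᶠ[𝓝 a] fun _ => f a := by
    filter_upwards [h, hmin] with x hmax hmin using le_antisymm hmax hmin
  simp [hconst.deriv.deriv_eq] at hpos

theorem ContDiffAt.differentiableAt_deriv (hf : ContDiffAt ℝ 2 f a) :
    DifferentiableAt ℝ (deriv f) a := by
  obtain ⟨s, hs, hfs⟩ := hf.contDiffOn le_rfl (by simp)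
  obtain ⟨t, hts, ht, hat⟩ := mem_nhds_iff.1 hs
  exact (((hfs.mono hts).deriv_of_isOpen ht (m := 1) (by norm_num)).differentiableOn
    (by norm_num) a hat).differentiableAt (ht.mem_nhds hat)

theorem ContDiffAt.eventually_differentiableAt (hf : ContDiffAt ℝ 2 f a) :
    ∀ᶠ x in 𝓝 a, DifferentiableAt ℝ f x :=
  (hf.eventually (by simp)).mono fun _ hx => hx.differentiableAt (by simp)

theorem deriv_deriv_add (hf : ContDiffAt ℝ 2 f a) (hg : ContDiffAt ℝ 2 g a) :
    deriv (deriv fun x => f x + g x) a = deriv (deriv f) a + deriv (deriv g) a := by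
  have h : deriv (fun x => f x + g x) =ᶠ[𝓝 a] fun x => deriv f x + deriv g x := by
    filter_upwards [hf.eventually_differentiableAt, hg.eventually_differentiableAt]
      with x hfx hgx using deriv_add hfx hgx
  rw [h.deriv_eq]
  exact (hf.differentiableAt_deriv.hasDerivAt.add hg.differentiableAt_deriv.hasDerivAt).deriv

theorem deriv_deriv_const_mul (c : ℝ) (f : ℝ → ℝ) (a : ℝ) :
    deriv (deriv fun x => c * f x) a = c * deriv (deriv f) a := by
  simp only [deriv_const_mul_field']

theorem deriv_deriv_sq (hf : ContDiffAt ℝ 2 f a) :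
    deriv (deriv fun x => f x ^ 2) a = 2 * f a * deriv (deriv f) a + 2 * deriv f a ^ 2 := by
  have h : deriv (fun x => f x ^ 2) =ᶠ[𝓝 a] fun x => 2 * f x * deriv f x := by
    filter_upwards [hf.eventually_differentiableAt] with x hx
    simpa using (hx.hasDerivAt.fun_pow 2).deriv
  rw [h.deriv_eq]
  have hd := ((hf.differentiableAt (by simp)).hasDerivAt.const_mul 2).fun_mul
    hf.differentiableAt_deriv.hasDerivAt
  rw [hd.deriv]
  ring

end SecondDerivative

section Laplacian

variable {u v w : ℝ × ℝ → ℝ} {p : ℝ × ℝ}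

theorem ContDiffAt.comp_prodMk_const (hu : ContDiffAt ℝ 2 u p) :
    ContDiffAt ℝ 2 (fun x => u (x, p.2)) p.1 :=
  hu.comp₂ (f₁ := fun x => x) contDiffAt_id contDiffAt_const

theorem ContDiffAt.comp_const_prodMk (hu : ContDiffAt ℝ 2 u p) :
    ContDiffAt ℝ 2 (fun y => u (p.1, y)) p.2 :=
  hu.comp₂ (f₂ := fun y => y) contDiffAt_const contDiffAt_id

theorem lap2_nonpos_of_isLocalMax (h : IsLocalMax u p) (hc : ContinuousAt u p) : lap2 u p ≤ 0 :=
  add_nonpos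
    (deriv_deriv_nonpos_of_isLocalMax (h.comp_continuous (g := fun x => (x, p.2)) (by fun_prop))
      (hc.comp (g := u) (f := fun x => (x, p.2)) (by fun_prop)))
    (deriv_deriv_nonpos_of_isLocalMax (h.comp_continuous (g := fun y => (p.1, y)) (by fun_prop))
      (hc.comp (g := u) (f := fun y => (p.1, y)) (by fun_prop)))

theorem lap2_neg (u : ℝ × ℝ → ℝ) (p : ℝ × ℝ) : lap2 (fun q => -u q) p = -lap2 u p := by
  simp only [lap2, deriv.fun_neg']
  ring

theorem lap2_add (hu : ContDiffAt ℝ 2 u p) (hv : ContDiffAt ℝ 2 v p) :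
    lap2 (fun q => u q + v q) p = lap2 u p + lap2 v p := by
  simp only [lap2]
  rw [deriv_deriv_add hu.comp_prodMk_const hv.comp_prodMk_const,
    deriv_deriv_add hu.comp_const_prodMk hv.comp_const_prodMk]
  ring

theorem lap2_const_mul (c : ℝ) (u : ℝ × ℝ → ℝ) (p : ℝ × ℝ) :
    lap2 (fun q => c * u q) p = c * lap2 u p := by
  simp only [lap2, deriv_deriv_const_mul]
  ring

theorem lap2_sq (hu : ContDiffAt ℝ 2 u p) :
    lap2 (fun q => u q ^ 2) p = 2 * u p * lap2 u p + 2 * gradSq2 u p := by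
  simp only [lap2, gradSq2]
  rw [deriv_deriv_sq hu.comp_prodMk_const, deriv_deriv_sq hu.comp_const_prodMk]
  ring

theorem lap2_sq_add_sq_add_three_mul_sq (hu : ContDiffAt ℝ 2 u p) (hv : ContDiffAt ℝ 2 v p)
    (hw : ContDiffAt ℝ 2 w p) :
    lap2 (fun q => u q ^ 2 + v q ^ 2 + 3 * w q ^ 2) p =
      2 * (u p * lap2 u p + v p * lap2 v p + 3 * (w p * lap2 w p)) +
        2 * (gradSq2 u p + gradSq2 v p + 3 * gradSq2 w p) := by
  rw [lap2_add ((hu.pow 2).add (hv.pow 2)) (contDiffAt_const.mul (hw.pow 2)),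
    lap2_add (hu.pow 2) (hv.pow 2), lap2_const_mul, lap2_sq hu, lap2_sq hv, lap2_sq hw]
  ring

theorem gradSq2_nonneg (u : ℝ × ℝ → ℝ) (p : ℝ × ℝ) : 0 ≤ gradSq2 u p := by
  unfold gradSq2
  positivity

theorem le_of_lap2_pos_of_frontier_le {U : Set (ℝ × ℝ)} {M : ℝ} (hU : IsOpen U)
    (hUb : Bornology.IsBounded U) (hu : ContinuousOn u (closure U))
    (hfr : ∀ p ∈ frontier U, u p ≤ M) (hlap : ∀ p ∈ U, M < u p → 0 < lap2 u p) :
    ∀ p ∈ closure U, u p ≤ M := by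
  intro p hp
  obtain ⟨p₀, hp₀, hmax⟩ := hUb.isCompact_closure.exists_isMaxOn ⟨p, hp⟩ hu
  refine (hmax hp).trans ?_
  by_cases hp₀U : p₀ ∈ U
  · by_contra! hM
    have hnhds := hU.mem_nhds hp₀U
    exact (hlap p₀ hp₀U hM).not_ge <| lap2_nonpos_of_isLocalMax
      ((hmax.on_subset subset_closure).isLocalMax hnhds)
      ((hu.mono subset_closure).continuousAt hnhds)
  · exact hfr p₀ ⟨hp₀, by rwa [hU.interior_eq]⟩

theorem le_of_lap2_neg_of_le_frontier {U : Set (ℝ × ℝ)} {M : ℝ} (hU : IsOpen U)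
    (hUb : Bornology.IsBounded U) (hu : ContinuousOn u (closure U))
    (hfr : ∀ p ∈ frontier U, M ≤ u p) (hlap : ∀ p ∈ U, u p < M → lap2 u p < 0) :
    ∀ p ∈ closure U, M ≤ u p := by
  intro p hp
  have := le_of_lap2_pos_of_frontier_le (u := fun q => -u q) (M := -M) hU hUb hu.neg
    (fun q hq => neg_le_neg (hfr q hq))
    (fun q hq hlt => by rw [lap2_neg]; exact neg_pos.2 (hlap q hq (neg_lt_neg_iff.1 hlt))) p hp
  exact neg_le_neg_iff.1 this

end Laplacian

theorem isOpen_TSq (η : ℝ) : IsOpen (TSq η) := by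
  unfold TSq
  refine (isOpen_lt ?_ ?_).and ((isOpen_lt ?_ ?_).and ((isOpen_lt ?_ ?_).and
    (isOpen_lt ?_ ?_))) <;> fun_prop

theorem isBounded_TSq (η : ℝ) : Bornology.IsBounded (TSq η) := by
  refine (Metric.isBounded_ball (x := (0 : ℝ × ℝ)) (r := 1)).subset
    fun p ⟨_, _, hsum, hdiff⟩ => ?_
  rw [mem_ball_zero_iff, Prod.norm_def, max_lt_iff, Real.norm_eq_abs, Real.norm_eq_abs,
    abs_lt, abs_lt]
  rw [abs_lt] at hsum hdiff
  constructor <;> constructor <;> linarith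

theorem closure_TSq_subset (η : ℝ) : closure (TSq η) ⊆
    {p | |p.1| ≤ 1 - η ∧ |p.2| ≤ 1 - η ∧ |p.1 + p.2| ≤ 1 ∧ |p.1 - p.2| ≤ 1} := by
  refine closure_minimal (fun p ⟨h₁, h₂, h₃, h₄⟩ => ⟨h₁.le, h₂.le, h₃.le, h₄.le⟩) ?_
  simp only [ofPred_and]
  refine (isClosed_le ?_ ?_).inter ((isClosed_le ?_ ?_).inter ((isClosed_le ?_ ?_).inter
    (isClosed_le ?_ ?_))) <;> fun_prop

theorem frontier_TSq_subset (η : ℝ) : frontier (TSq η) ⊆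
    (edgeC1 η ∪ edgeC3 η) ∪ (edgeC2 η ∪ edgeC4 η) ∪ (edgeS1 η ∪ edgeS3 η) ∪
      (edgeS2 η ∪ edgeS4 η) := by
  intro p hp
  rw [(isOpen_TSq η).frontier_eq] at hp
  obtain ⟨hcl, hnot⟩ := hp
  obtain ⟨h₁, h₂, h₃, h₄⟩ := closure_TSq_subset η hcl
  simp only [TSq, mem_ofPred_eq, not_and_or, not_lt] at hnot
  rw [abs_le] at h₁ h₂ h₃ h₄
  simp only [edgeC1, edgeC2, edgeC3, edgeC4, edgeS1, edgeS2, edgeS3, edgeS4, mem_union,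
    mem_ofPred_eq, abs_le]
  rcases hnot with h | h | h | h <;> rcases le_abs'.1 h with h | h
  all_goals grind

section Roots

variable {A B C : ℝ}

theorem splus_pos (hB : 0 < B) (hC : 0 < C) : 0 < splus A B C := by
  unfold splus
  positivity

theorem sminus_lt_splus (hB : 0 < B) (hC : 0 < C) : sminus A B C < splus A B C := by
  have hD : 0 < √(B ^ 2 + 24 * |A| * C) := Real.sqrt_pos.2 (by positivity)
  unfold splus sminus
  gcongr
  linarith

theorem two_mul_mul_splus_add_sminus (hC : C ≠ 0) :
    2 * C * (splus A B C + sminus A B C) = B := by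
  unfold splus sminus
  field_simp
  ring

theorem two_mul_mul_splus_mul_sminus (hC : 0 < C) (hA : A ≤ 0) :
    2 * C * splus A B C * sminus A B C = 3 * A := by
  have hD := Real.sq_sqrt (by positivity : 0 ≤ B ^ 2 + 24 * |A| * C)
  unfold splus sminus
  rw [abs_of_nonpos hA] at hD ⊢
  generalize √(B ^ 2 + 24 * -A * C) = D at hD ⊢
  field_simp
  linear_combination -2 * hD

theorem neg_half_splus_le_sminus (hB : 0 < B) (hC : 0 < C) (hA1 : -(B ^ 2) / (3 * C) ≤ A)
    (hA2 : A ≤ 0) : -(splus A B C / 2) ≤ sminus A B C := by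
  have hD : √(B ^ 2 + 24 * |A| * C) ≤ 3 * B := by
    rw [Real.sqrt_le_left (by positivity), abs_of_nonpos hA2]
    rw [div_le_iff₀ (by positivity)] at hA1
    nlinarith
  have hsum : sminus A B C + splus A B C / 2 = (3 * B - √(B ^ 2 + 24 * |A| * C)) / (8 * C) := by
    unfold splus sminus
    field_simp
    ring
  have : 0 ≤ (3 * B - √(B ^ 2 + 24 * |A| * C)) / (8 * C) :=
    div_nonneg (by linarith) (by positivity)
  linarith

end Roots

theorem sq_g0_le {A B C η s : ℝ} (hs : |s| ≤ η) : g0 A B C η s ^ 2 ≤ splus A B C ^ 2 / 4 := by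
  have h : |g0 A B C η s| ≤ |splus A B C| / 2 := by
    rcases (abs_nonneg s |>.trans hs).eq_or_lt with rfl | hη
    · -- `η = 0`: the division by zero makes `g0` vanish
      simp only [g0, div_zero, abs_zero, mul_zero]
      positivity
    · rw [g0, abs_div, abs_mul, abs_of_pos (by positivity : 0 < 2 * η),
        div_le_div_iff₀ (by positivity) two_pos]
      nlinarith [abs_nonneg (splus A B C)]
  calc g0 A B C η s ^ 2 = |g0 A B C η s| ^ 2 := (sq_abs _).symm
    _ ≤ (|splus A B C| / 2) ^ 2 := pow_le_pow_left₀ (abs_nonneg _) h 2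
    _ = splus A B C ^ 2 / 4 := by rw [div_pow, sq_abs]; norm_num

theorem BC1.sq_le {A B C η : ℝ} {q1 : ℝ × ℝ → ℝ} (h : BC1 A B C η q1) {p : ℝ × ℝ}
    (hp : p ∈ frontier (TSq η)) : q1 p ^ 2 ≤ splus A B C ^ 2 / 4 := by
  obtain ⟨hC13, hC24, hS13, hS24⟩ := h
  rcases frontier_TSq_subset η hp with ((hC | hC) | hS) | hS
  · rw [hC13 p hC]; exact (by ring : _ = _).le
  · rw [hC24 p hC]; exact (by ring : _ = _).le
  · rw [hS13 p hS]; exact sq_g0_le (by rcases hS with h | h <;> exact h.2)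
  · rw [hS24 p hS]; exact sq_g0_le (by rcases hS with h | h <;> exact h.2)

section Reaction

variable {A B C s sm t r : ℝ}

theorem sigma_reaction_pos (hB : B = 2 * C * (s + sm)) (hA : 3 * A = 2 * C * s * sm)
    (hC : 0 < C) (hs : 0 < s) (hsm : -(s / 2) ≤ sm) (hsm' : sm < s) (hr : 0 ≤ r)
    (hσ : s ^ 2 / 3 < r + 3 * t ^ 2) :
    0 < (r + 3 * t ^ 2) * (A + 2 * C * (r + 3 * t ^ 2)) + 3 * B * t * (r - t ^ 2) := by
  by_contra! hK
  have hB0 : 0 < B := by rw [hB]; nlinarith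
  have hBs : B < 4 * C * s := by rw [hB]; nlinarith
  set m := r + 3 * t ^ 2 with hm
  set e := m - s ^ 2 / 3 with he
  have he0 : 0 < e := by linarith
  have hm0 : 0 < m := lt_of_le_of_lt (by positivity) hσ
  have hK' : m * (B * s / 3 + 2 * C * e) ≤ 3 * B * (-t) * (m - 4 * t ^ 2) := by
    have : m * (A + 2 * C * m) = m * (B * s / 3 + 2 * C * e) := by
      rw [he]; linear_combination (m / 3) * hA - (m * s / 3) * hB
    have hr' : r = m - 3 * t ^ 2 := by linarith
    rw [hr'] at hK; nlinarith
  have hcube : 27 * t ^ 2 * (m - 4 * t ^ 2) ^ 2 ≤ m ^ 3 := by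
    have : m ^ 3 - 27 * t ^ 2 * (m - 4 * t ^ 2) ^ 2 = r * (m - 12 * t ^ 2) ^ 2 := by
      rw [hm]; ring
    nlinarith [mul_nonneg hr (sq_nonneg (m - 12 * t ^ 2))]
  have hsq : (m * (B * s / 3 + 2 * C * e)) ^ 2 ≤ m ^ 2 * (B ^ 2 * m / 3) := by
    calc (m * (B * s / 3 + 2 * C * e)) ^ 2 ≤ (3 * B * (-t) * (m - 4 * t ^ 2)) ^ 2 :=
          pow_le_pow_left₀ (by positivity) hK' 2
      _ = B ^ 2 / 3 * (27 * t ^ 2 * (m - 4 * t ^ 2) ^ 2) := by ring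
      _ ≤ B ^ 2 / 3 * m ^ 3 := by gcongr
      _ = m ^ 2 * (B ^ 2 * m / 3) := by ring
  have hdiv : (B * s / 3 + 2 * C * e) ^ 2 ≤ B ^ 2 * m / 3 :=
    le_of_mul_le_mul_left (by rw [mul_pow] at hsq; exact hsq) (by positivity)
  -- expanding with `m = s²/3 + e`, this says `4C²e² + (4Cs - B)Be/3 ≤ 0`
  nlinarith [mul_pos (mul_pos hC hC) (mul_pos he0 he0),
    mul_lt_mul_of_pos_right hBs (mul_pos hB0 he0)]

theorem q3_reaction_pos (hB : B = 2 * C * (s + sm)) (hA : 3 * A = 2 * C * s * sm)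
    (hC : 0 < C) (hsm : -(s / 2) ≤ sm) (ht : sm / 3 < t) (ht0 : t < 0) (hr : 0 ≤ r) :
    0 < t * (A - B * t + 6 * C * t ^ 2) + r * (2 * C * t + B / 3) := by
  have hfac : A - B * t + 6 * C * t ^ 2 = 6 * C * (t - sm / 3) * (t - s / 3) := by
    linear_combination (-t) * hB + (1 / 3) * hA
  have hcubic : 0 < t * (A - B * t + 6 * C * t ^ 2) := by
    rw [hfac]
    exact mul_pos_of_neg_of_neg ht0 (mul_neg_of_pos_of_neg (by positivity) (by linarith))
  have hcoef : 0 ≤ 2 * C * t + B / 3 := by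
    rw [hB]; nlinarith
  nlinarith [mul_nonneg hr hcoef]

theorem q3_reaction_neg (hB : B = 2 * C * (s + sm)) (hA : 3 * A = 2 * C * s * sm)
    (hC : 0 < C) (hs : 0 < s) (hsm : -(s / 2) ≤ sm) (ht : t < -(s / 6)) (hr : 0 ≤ r)
    (hσ : r + 3 * t ^ 2 ≤ s ^ 2 / 3) :
    t * (A - B * t + 6 * C * t ^ 2) + r * (2 * C * t + B / 3) < 0 := by
  have hfac : A - B * t + 6 * C * t ^ 2 = 6 * C * (t - sm / 3) * (t - s / 3) := by
    linear_combination (-t) * hB + (1 / 3) * hA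
  have hcubic : t * (A - B * t + 6 * C * t ^ 2) < 0 := by
    rw [hfac]
    exact mul_neg_of_neg_of_pos (by linarith)
      (mul_pos_of_neg_of_neg (mul_neg_of_pos_of_neg (by positivity) (by linarith)) (by linarith))
  rcases le_or_gt (2 * C * t + B / 3) 0 with hcoef | hcoef
  · nlinarith [mul_nonpos_of_nonneg_of_nonpos hr hcoef]
  · have hr' : r * (2 * C * t + B / 3) ≤ (s ^ 2 / 3 - 3 * t ^ 2) * (2 * C * t + B / 3) :=
      mul_le_mul_of_nonneg_right (by linarith) hcoef.le
    have hB0 : 0 < B := by rw [hB]; nlinarith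
    have hextreme :
        t * (A - B * t + 6 * C * t ^ 2) + (s ^ 2 / 3 - 3 * t ^ 2) * (2 * C * t + B / 3)
          = -(2 * B * ((s / 3 - t) * -(t + s / 6))) := by
      linear_combination (t / 3) * hA - (s * t / 3) * hB
    nlinarith [mul_pos hB0
      (mul_pos (by linarith : 0 < s / 3 - t) (by linarith : 0 < -(t + s / 6)))]

end Reaction

section Solution

variable {A B C L lam η : ℝ} {q1 q2 q3 : ℝ × ℝ → ℝ}

theorem IsSolEL123.sigma_le (hsol : IsSolEL123 A B C L lam η q1 q2 q3) (hB : 0 < B) (hC : 0 < C)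
    (hA1 : -(B ^ 2) / (3 * C) ≤ A) (hA2 : A < 0) (hL : 0 < L) (hlam : 0 < lam) :
    ∀ p ∈ closure (TSq η), q1 p ^ 2 + q2 p ^ 2 + 3 * q3 p ^ 2 ≤ splus A B C ^ 2 / 3 := by
  obtain ⟨hd1, hd2, hd3, hc1, hc2, hc3, he1, he2, he3, hbc1, hbc2, hbc3⟩ := hsol
  refine le_of_lap2_pos_of_frontier_le (isOpen_TSq η) (isBounded_TSq η)
    (((hc1.pow 2).add (hc2.pow 2)).add (continuousOn_const.mul (hc3.pow 2)))
    (fun p hp => ?_) (fun p hp hσ => ?_)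
  · rw [hbc2 p hp, hbc3 p hp]
    nlinarith [hbc1.sq_le hp]
  · have hK := sigma_reaction_pos (two_mul_mul_splus_add_sminus hC.ne').symm
      (two_mul_mul_splus_mul_sminus hC hA2.le).symm hC (splus_pos hB hC)
      (neg_half_splus_le_sminus hB hC hA1 hA2.le) (sminus_lt_splus hB hC)
      (by positivity : 0 ≤ q1 p ^ 2 + q2 p ^ 2) hσ
    have hU := (isOpen_TSq η).mem_nhds hp
    have hgrad := add_nonneg (add_nonneg (gradSq2_nonneg q1 p) (gradSq2_nonneg q2 p))
      (mul_nonneg zero_le_three (gradSq2_nonneg q3 p))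
    rw [lap2_sq_add_sq_add_three_mul_sq (hd1.contDiffAt hU) (hd2.contDiffAt hU)
      (hd3.contDiffAt hU), he1 p hp, he2 p hp, he3 p hp]
    calc 0 < 2 * (lam ^ 2 / L) * ((q1 p ^ 2 + q2 p ^ 2 + 3 * q3 p ^ 2) *
          (A + 2 * C * (q1 p ^ 2 + q2 p ^ 2 + 3 * q3 p ^ 2)) +
          3 * B * q3 p * (q1 p ^ 2 + q2 p ^ 2 - q3 p ^ 2)) := mul_pos (by positivity) hK
      _ ≤ _ := by linear_combination 2 * hgrad

theorem IsSolEL123.neg_splus_div_six_le (hsol : IsSolEL123 A B C L lam η q1 q2 q3) (hB : 0 < B)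
    (hC : 0 < C) (hA1 : -(B ^ 2) / (3 * C) ≤ A) (hA2 : A < 0) (hL : 0 < L) (hlam : 0 < lam) :
    ∀ p ∈ closure (TSq η), -(splus A B C) / 6 ≤ q3 p := by
  have hσ := hsol.sigma_le hB hC hA1 hA2 hL hlam
  obtain ⟨-, -, -, -, -, hc3, -, -, he3, -, -, hbc3⟩ := hsol
  refine le_of_lap2_neg_of_le_frontier (isOpen_TSq η) (isBounded_TSq η) hc3
    (fun p hp => (hbc3 p hp).ge) fun p hp hlt => ?_
  have hF := q3_reaction_neg (two_mul_mul_splus_add_sminus hC.ne').symm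
    (two_mul_mul_splus_mul_sminus hC hA2.le).symm hC (splus_pos hB hC)
    (neg_half_splus_le_sminus hB hC hA1 hA2.le) (by linarith)
    (by positivity : 0 ≤ q1 p ^ 2 + q2 p ^ 2) (hσ p (subset_closure hp))
  rw [he3 p hp]
  calc _ = lam ^ 2 / L * (q3 p * (A - B * q3 p + 6 * C * q3 p ^ 2) +
        (q1 p ^ 2 + q2 p ^ 2) * (2 * C * q3 p + B / 3)) := by ring
    _ < 0 := mul_neg_of_pos_of_neg (by positivity) hF

theorem IsSolEL123.le_sminus_div_three (hsol : IsSolEL123 A B C L lam η q1 q2 q3) (hB : 0 < B)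
    (hC : 0 < C) (hA1 : -(B ^ 2) / (3 * C) ≤ A) (hA2 : A < 0) (hL : 0 < L) (hlam : 0 < lam)
    (hq3 : ∀ p ∈ TSq η, q3 p < 0) :
    ∀ p ∈ closure (TSq η), q3 p ≤ sminus A B C / 3 := by
  obtain ⟨-, -, -, -, -, hc3, -, -, he3, -, -, hbc3⟩ := hsol
  have hsm := neg_half_splus_le_sminus hB hC hA1 hA2.le
  refine le_of_lap2_pos_of_frontier_le (isOpen_TSq η) (isBounded_TSq η) hc3
    (fun p hp => by rw [hbc3 p hp]; linarith) fun p hp hgt => ?_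
  have hF := q3_reaction_pos (two_mul_mul_splus_add_sminus hC.ne').symm
    (two_mul_mul_splus_mul_sminus hC hA2.le).symm hC hsm hgt (hq3 p hp)
    (by positivity : 0 ≤ q1 p ^ 2 + q2 p ^ 2)
  rw [he3 p hp]
  calc 0 < lam ^ 2 / L * (q3 p * (A - B * q3 p + 6 * C * q3 p ^ 2) +
        (q1 p ^ 2 + q2 p ^ 2) * (2 * C * q3 p + B / 3)) := mul_pos (by positivity) hF
    _ = _ := by ring

end Solution

theorem statement_5_general (A B C L lam η : ℝ) (hB : 0 < B) (hC : 0 < C)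
    (hA1 : -(B ^ 2) / (3 * C) ≤ A) (hA2 : A < 0)
    (hL : 0 < L) (hlam : 0 < lam)
    (q1 q2 q3 : ℝ × ℝ → ℝ) (hsol : IsSolEL123 A B C L lam η q1 q2 q3)
    (hq3 : ∀ p ∈ TSq η, q3 p < 0) :
    ∀ p ∈ TSq η, -(splus A B C) / 6 ≤ q3 p ∧ q3 p ≤ sminus A B C / 3 :=
  fun p hp => ⟨hsol.neg_splus_div_six_le hB hC hA1 hA2 hL hlam p (subset_closure hp),
    hsol.le_sminus_div_three hB hC hA1 hA2 hL hlam hq3 p (subset_closure hp)⟩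

/-- Proposition prop:bounds-highA: for `−B²/(3C) ≤ A < 0` and a
solution of (EL123)–(BC123) with `q₃ < 0` in `Ω`, one has `−s₊/6 ≤ q₃ ≤ s₋/3` in `Ω`. -/
theorem statement_5 (A B C L lam η : ℝ) (hB : 0 < B) (hC : 0 < C)
    (hA1 : -(B ^ 2) / (3 * C) ≤ A) (hA2 : A < 0)
    (hL : 0 < L) (hlam : 0 < lam) (hη : η ∈ Ioo (0 : ℝ) 1)
    (q1 q2 q3 : ℝ × ℝ → ℝ) (hsol : IsSolEL123 A B C L lam η q1 q2 q3)
    (hq3 : ∀ p ∈ TSq η, q3 p < 0) :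
    ∀ p ∈ TSq η, -(splus A B C) / 6 ≤ q3 p ∧ q3 p ≤ sminus A B C / 3 :=
  statement_5_general A B C L lam η hB hC hA1 hA2 hL hlam q1 q2 q3 hsol hq3
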